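/- For every integer n with |n| ≥ 2, the image of X₂ = {z ∈ ℂ : |z| > 1} ∪ {∞} under B₂^n : z ↦ z/(2nz+1) is contained in K₁ = {z : |z| ≤ 1/2}. -/

import Mathlib

open OnePoint

/-- The matrix `A_λ = [[1,λ],[0,1]]` in `SL₂(ℂ)`. -/
def Amat (lam : ℂ) : Matrix.SpecialLinearGroup (Fin 2) ℂ :=
  ⟨!![1, lam; 0, 1], by simp [Matrix.det_fin_two_of]⟩

/-- The matrix `B_μ = [[1,0],[μ,1]]` in `SL₂(ℂ)`. -/
def Bmat (mu : ℂ) : Matrix.SpecialLinearGroup (Fin 2) ℂ :=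
  ⟨!![1, 0; mu, 1], by simp [Matrix.det_fin_two_of]⟩

/-- The action of `SL₂(ℂ)` on the extended complex plane `ℂ ∪ {∞}`
by Möbius transformations. -/
noncomputable def moebius (g : Matrix.SpecialLinearGroup (Fin 2) ℂ) (z : OnePoint ℂ) : OnePoint ℂ :=
  OnePoint.rec
    (if g.1 1 0 = 0 then ∞ else ((g.1 0 0 / g.1 1 0 : ℂ) : OnePoint ℂ))
    (fun w => if g.1 1 0 * w + g.1 1 1 = 0 then ∞
      else (((g.1 0 0 * w + g.1 0 1) / (g.1 1 0 * w + g.1 1 1) : ℂ) : OnePoint ℂ)) z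

/-! A Möbius map `z ↦ z / (c z + 1)` with `‖c‖ > 1` sends `{‖z‖ > 1} ∪ {∞}` into the disc of
radius `1 / (‖c‖ - 1)`, because `‖c z + 1‖ ≥ ‖c‖ ‖z‖ - 1 ≥ (‖c‖ - 1) ‖z‖` there.
Since `B₂ⁿ = B_{2n}` and `‖2n‖ ≥ 4`, that radius is at most `1/3`. -/

lemma Bmat_zero : Bmat 0 = 1 := by
  ext i j
  fin_cases i <;> fin_cases j <;> rfl

lemma Bmat_mul (a b : ℂ) : Bmat a * Bmat b = Bmat (a + b) := by
  ext i j
  rw [Matrix.SpecialLinearGroup.coe_mul]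
  fin_cases i <;> fin_cases j <;> simp [Bmat]

lemma Bmat_inv (a : ℂ) : (Bmat a)⁻¹ = Bmat (-a) :=
  inv_eq_of_mul_eq_one_right (by rw [Bmat_mul, add_neg_cancel, Bmat_zero])

lemma Bmat_zpow (a : ℂ) (n : ℤ) : Bmat a ^ n = Bmat (n * a) := by
  induction n using Int.induction_on with
  | zero => simp [Bmat_zero]
  | succ k ih => rw [zpow_add_one, ih, Bmat_mul]; push_cast; ring_nf
  | pred k ih => rw [zpow_sub_one, ih, Bmat_inv, Bmat_mul]; push_cast; ring_nf

lemma moebius_Bmat_coe {c w : ℂ} (h : c * w + 1 ≠ 0) :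
    moebius (Bmat c) w = ↑(w / (c * w + 1)) := by
  simp only [moebius, Bmat, OnePoint.rec]
  simp [h]

lemma moebius_Bmat_infty {c : ℂ} (hc : c ≠ 0) : moebius (Bmat c) ∞ = ↑c⁻¹ := by
  simp only [moebius, Bmat, OnePoint.rec]
  simp [hc]

lemma sub_one_mul_norm_le_norm_mul_add_one {c w : ℂ} (hw : 1 ≤ ‖w‖) :
    (‖c‖ - 1) * ‖w‖ ≤ ‖c * w + 1‖ :=
  calc (‖c‖ - 1) * ‖w‖ ≤ ‖c * w‖ - 1 := by rw [norm_mul]; linarith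
    _ ≤ ‖c * w + 1‖ := by
      have := norm_sub_le (c * w + 1) 1
      rw [add_sub_cancel_right, norm_one] at this
      linarith

lemma norm_div_mul_add_one_le {c w : ℂ} (hc : 1 < ‖c‖) (hw : 1 ≤ ‖w‖) :
    ‖w / (c * w + 1)‖ ≤ 1 / (‖c‖ - 1) := by
  have hpos : 0 < (‖c‖ - 1) * ‖w‖ := by positivity
  calc ‖w / (c * w + 1)‖ ≤ ‖w‖ / ((‖c‖ - 1) * ‖w‖) := by
        rw [norm_div]
        exact div_le_div_of_nonneg_left (norm_nonneg w) hpos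
          (sub_one_mul_norm_le_norm_mul_add_one hw)
    _ = 1 / (‖c‖ - 1) := by field_simp

lemma moebius_Bmat_mem_closedBall {c : ℂ} (hc : 1 < ‖c‖) {z : OnePoint ℂ}
    (hz : z ∈ ((↑) : ℂ → OnePoint ℂ) '' {u : ℂ | 1 < ‖u‖} ∪ {∞}) :
    ∃ u : ℂ, moebius (Bmat c) z = u ∧ ‖u‖ ≤ 1 / (‖c‖ - 1) := by
  rcases hz with ⟨w, hw, rfl⟩ | rfl
  · have hw : 1 < ‖w‖ := hw
    have hden : c * w + 1 ≠ 0 := norm_pos_iff.mp <|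
      (by positivity : 0 < (‖c‖ - 1) * ‖w‖).trans_le (sub_one_mul_norm_le_norm_mul_add_one hw.le)
    exact ⟨_, moebius_Bmat_coe hden, norm_div_mul_add_one_le hc hw.le⟩
  · refine ⟨_, moebius_Bmat_infty (norm_pos_iff.mp (one_pos.trans hc)), ?_⟩
    rw [norm_inv, ← one_div]
    exact one_div_le_one_div_of_le (by linarith) (by linarith)

/-- For every integer `n` with `|n| ≥ 2`, the image of
`X₂ = {|z| > 1} ∪ {∞}` under `B₂^n : z ↦ z/(2nz+1)` is contained in `K₁ = {|z| ≤ 1/2}`. -/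
theorem stmt_4 (n : ℤ) (hn : 2 ≤ |n|)
    (z : OnePoint ℂ)
    (hz : z ∈ ((↑) : ℂ → OnePoint ℂ) '' {u : ℂ | 1 < ‖u‖} ∪ {∞}) :
    ∃ u : ℂ, moebius (Bmat 2 ^ n) z = u ∧ ‖u‖ ≤ 1 / 2 := by
  have hc : 4 ≤ ‖(n : ℂ) * 2‖ := by
    rw [norm_mul, Complex.norm_intCast, Complex.norm_two]
    have : (2 : ℝ) ≤ |(n : ℝ)| := by exact_mod_cast hn
    linarith
  rw [Bmat_zpow]
  obtain ⟨u, hmap, hu⟩ := moebius_Bmat_mem_closedBall (by linarith) hz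
  refine ⟨u, hmap, hu.trans ?_⟩
  gcongr
  linarith
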